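/- Fix an integer n ≥ 2 and let △ₙ := {z ∈ ℂⁿ : |z₁| < |z₂| < ⋯ < |zₙ| < 1} and 𝕋ⁿ := {z ∈ ℂⁿ : |z₁| = ⋯ = |zₙ| = 1}. Then: (a) 𝕋ⁿ is contained in the topological boundary of △ₙ; (b) every function f continuous on the closure of △ₙ and holomorphic on △ₙ satisfies |f(z)| ≤ sup_{w∈𝕋ⁿ}|f(w)| for all z ∈ △ₙ; and (c) every closed subset S of the topological boundary of △ₙ such that |f(z)| ≤ sup_{w∈S}|f(w)| holds for all z ∈ △ₙ and all such f must contain 𝕋ⁿ. In other words, 𝕋ⁿ is the distinguished boundary of the n-dimensional Hartogs triangle △ₙ. -/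

import Mathlib

/-- The `n`-dimensional Hartogs triangle `△ₙ = {z : |z₁| < |z₂| < ⋯ < |zₙ| < 1}`. -/
def hartogsTriangle (n : ℕ) : Set (Fin n → ℂ) :=
  {z | (StrictMono fun i => ‖z i‖) ∧ ∀ i, ‖z i‖ < 1}

/-- The torus `𝕋ⁿ = {z : |z₁| = ⋯ = |zₙ| = 1}` inside `ℂⁿ`. -/
def torusSet (n : ℕ) : Set (Fin n → ℂ) := {z | ∀ i, ‖z i‖ = 1}

/-!
The map `tailProd t = (t₁⋯tₙ, t₂⋯tₙ, …, tₙ)` sends the punctured open polydisc into `△ₙ`, the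
closed polydisc into `closure △ₙ` and the torus into itself, and every point of `△ₙ` or `𝕋ⁿ` is
the image of a point of the closed polydisc, via `tᵢ = zᵢ / zᵢ₊₁`. So for `f` continuous on
`closure △ₙ` and holomorphic on `△ₙ`, `f ∘ tailProd` is continuous on the closed polydisc and
holomorphic off the coordinate hyperplanes. Every one-variable slice of it is holomorphic on the
unit disc: slices through the punctured polydisc are, by a removable singularity at `0`, and the
others are uniform limits of those. The one-variable maximum principle, applied one coordinate
at a time, then moves every point out to the torus.

Minimality: for `w ∈ 𝕋ⁿ` the polynomial `∏ᵢ (1 + w̄ᵢ zᵢ) / 2` equals `1` at `w` and has modulus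
`< 1` on the rest of the closed polydisc, so a closed set avoiding `w` cannot carry the maximum
of its modulus over `△ₙ`, whose closure contains `w`.
-/

open Set Metric Filter Topology Function

lemma Finset.prod_lt_one_of_mem {ι R : Type*} [CommMonoidWithZero R] [Preorder R]
    [ZeroLEOneClass R] [PosMulMono R] {s : Finset ι} {f : ι → R} (h0 : ∀ j ∈ s, 0 ≤ f j)
    (h1 : ∀ j ∈ s, f j ≤ 1) {i : ι} (hi : i ∈ s) (hfi : f i < 1) : ∏ j ∈ s, f j < 1 := by
  classical
  rw [← Finset.mul_prod_erase s f hi]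
  exact mul_lt_one_of_nonneg_of_lt_one_left (h0 i hi) hfi
    (Finset.prod_le_one (fun j hj => h0 j (Finset.mem_of_mem_erase hj))
      fun j hj => h1 j (Finset.mem_of_mem_erase hj))

lemma le_ciSup₂_of_bddAbove_image {X α : Type*} [ConditionallyCompleteLattice α] {T : Set X}
    {f : X → α} (hf : BddAbove (f '' T)) {x : X} (hx : x ∈ T) : f x ≤ ⨆ w ∈ T, f w :=
  le_ciSup₂ (f := fun w (_ : w ∈ T) => f w)
    (hf.mono (by rintro _ ⟨_, ⟨w, rfl⟩, ⟨hw, rfl⟩⟩; exact mem_image_of_mem f hw)) x hx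

/-- Over `ℝ` an empty `⨆` is `0`, hence the assumption `0 < a`. -/
lemma IsCompact.biSup_lt {X : Type*} [TopologicalSpace X] {K : Set X} (hK : IsCompact K)
    {f : X → ℝ} (hf : ContinuousOn f K) {a : ℝ} (ha : 0 < a) (hlt : ∀ x ∈ K, f x < a) :
    ⨆ x ∈ K, f x < a := by
  obtain ⟨b, hb0, hba, hfb⟩ : ∃ b, 0 ≤ b ∧ b < a ∧ ∀ x ∈ K, f x ≤ b := by
    rcases K.eq_empty_or_nonempty with rfl | hne
    · exact ⟨0, le_rfl, ha, by simp⟩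
    · obtain ⟨x₀, hx₀, hmax⟩ := hK.exists_isMaxOn hne hf
      exact ⟨max (f x₀) 0, le_max_right _ _, max_lt (hlt x₀ hx₀) ha,
        fun x hx => le_max_of_le_left (hmax hx)⟩
  exact (Real.iSup_le (fun x => Real.iSup_le (hfb x) hb0) hb0).trans_lt hba

lemma norm_one_add_div_two_le_one {a : ℂ} (ha : ‖a‖ ≤ 1) : ‖(1 + a) / 2‖ ≤ 1 := by
  rw [norm_div, Complex.norm_two, div_le_one two_pos]
  linarith [norm_add_le 1 a, norm_one (α := ℂ)]

lemma norm_one_add_div_two_lt_one {a : ℂ} (ha : ‖a‖ ≤ 1) (ha1 : a ≠ 1) : ‖(1 + a) / 2‖ < 1 := by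
  have h := strictConvex_closedBall ℝ (0 : ℂ) 1 (by simp : (1 : ℂ) ∈ closedBall 0 1)
    (mem_closedBall_zero_iff.mpr ha) ha1.symm one_half_pos one_half_pos (add_halves 1)
  rw [interior_closedBall _ one_ne_zero, mem_ball_zero_iff] at h
  calc ‖(1 + a) / 2‖ = ‖(1 / 2 : ℝ) • (1 : ℂ) + (1 / 2 : ℝ) • a‖ := by
        rw [Complex.real_smul, Complex.real_smul]; push_cast; ring_nf
    _ < 1 := h

lemma closure_ball_diff_zero : closure (ball (0 : ℂ) 1 \ {0}) = closedBall 0 1 := by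
  refine subset_antisymm ?_ ?_
  · simpa [closure_ball (0 : ℂ) one_ne_zero] using
      closure_mono (sdiff_subset (s := ball (0 : ℂ) 1))
  · rw [← closure_ball (0 : ℂ) one_ne_zero]
    refine closure_minimal (fun z hz => ?_) isClosed_closure
    have := isOpen_ball.inter_closure ⟨hz, (closure_compl_singleton (0 : ℂ)).symm ▸ mem_univ z⟩
    simpa [sdiff_eq_compl_inter, inter_comm] using this

section Polydisc

variable {ι E : Type*} [Fintype ι] [NormedAddCommGroup E] [NormedSpace ℂ E]

lemma closedBall_subset_closure_pi_ball_diff_zero :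
    closedBall (0 : ι → ℂ) 1 ⊆ closure (pi univ fun _ => ball (0 : ℂ) 1 \ {0}) := by
  rw [closure_pi_set, closedBall_pi _ zero_le_one]
  simp [closure_ball_diff_zero]

variable [DecidableEq ι]

lemma update_mem_closedBall {u : ι → ℂ} (hu : u ∈ closedBall 0 1) (k : ι) {z : ℂ}
    (hz : z ∈ closedBall 0 1) : update u k z ∈ closedBall 0 1 := by
  rw [closedBall_pi _ zero_le_one] at hu ⊢
  intro i _
  rcases eq_or_ne i k with rfl | hik
  · simpa using hz
  · simpa [hik] using hu i trivial

lemma dist_update_le (u v : ι → ℂ) (k : ι) (z : ℂ) :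
    dist (update v k z) (update u k z) ≤ dist v u := by
  refine dist_pi_le_iff dist_nonneg |>.mpr fun i => ?_
  rcases eq_or_ne i k with rfl | hik
  · simp
  · simpa [hik] using dist_le_pi_dist v u i

lemma tendstoUniformly_update {v : ℕ → ι → ℂ} {u : ι → ℂ} (hvu : Tendsto v atTop (𝓝 u))
    (k : ι) : TendstoUniformly (fun m z => update (v m) k z) (update u k) atTop := by
  refine Metric.tendstoUniformly_iff.mpr fun ε hε => ?_
  filter_upwards [Metric.tendsto_nhds.mp hvu ε hε] with m hm z
  rw [dist_comm]
  exact (dist_update_le u (v m) k z).trans_lt hm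

theorem diffContOnCl_comp_update [CompleteSpace E] {g : (ι → ℂ) → E}
    (hgc : ContinuousOn g (closedBall 0 1))
    (hgd : DifferentiableOn ℂ g (pi univ fun _ => ball (0 : ℂ) 1 \ {0}))
    {u : ι → ℂ} (hu : u ∈ closedBall 0 1) (k : ι) :
    DiffContOnCl ℂ (fun z => g (update u k z)) (ball 0 1) := by
  set P := pi univ fun _ : ι => ball (0 : ℂ) 1 \ {0}
  have hP : IsOpen P := isOpen_set_pi finite_univ fun _ _ => isOpen_ball.sdiff isClosed_singleton
  have hPK : P ⊆ closedBall 0 1 := by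
    rw [closedBall_pi _ zero_le_one]
    exact pi_mono fun _ _ => sdiff_subset.trans ball_subset_closedBall
  have hcont : ∀ v ∈ closedBall (0 : ι → ℂ) 1,
      ContinuousOn (fun z => g (update v k z)) (closedBall 0 1) := fun v hv =>
    hgc.comp (continuous_const.update k continuous_id : Continuous (update v k)).continuousOn
      fun z hz => update_mem_closedBall hv k hz
  refine ⟨?_, by rw [closure_ball (0 : ℂ) one_ne_zero]; exact hcont u hu⟩
  obtain ⟨v, hvP, hvu⟩ :=
    mem_closure_iff_seq_limit.mp (closedBall_subset_closure_pi_ball_diff_zero hu)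
  have hdiff : ∀ m, DifferentiableOn ℂ (fun z => g (update (v m) k z)) (ball 0 1) := by
    intro m
    refine (Complex.differentiableOn_compl_singleton_and_continuousAt_iff
      (ball_mem_nhds 0 one_pos)).mp ⟨fun z hz => ?_, ?_⟩
    · have hmem : update (v m) k z ∈ P := by
        intro i _
        rcases eq_or_ne i k with rfl | hik
        · simpa using hz
        · simpa [hik] using hvP m i trivial
      exact ((hgd.differentiableAt (hP.mem_nhds hmem)).comp z
        (hasFDerivAt_update (v m) z).differentiableAt).differentiableWithinAt
    · exact (hcont (v m) (hPK (hvP m))).continuousAt (closedBall_mem_nhds 0 one_pos)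
  have hunif : TendstoUniformlyOn (fun m z => g (update (v m) k z)) (fun z => g (update u k z))
      atTop (ball 0 1) :=
    (isCompact_closedBall 0 1).uniformContinuousOn_of_continuous hgc
      |>.comp_tendstoUniformlyOn_eventually
        (Eventually.of_forall fun m z hz =>
          update_mem_closedBall (hPK (hvP m)) k (ball_subset_closedBall hz))
        (fun z hz => update_mem_closedBall hu k (ball_subset_closedBall hz))
        ((tendstoUniformly_update hvu k).tendstoUniformlyOn)
  exact hunif.tendstoLocallyUniformlyOn.differentiableOn (Eventually.of_forall hdiff) isOpen_ball

end Polydisc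

theorem polydisc_norm_le_of_forall_torus_norm_le {ι E : Type*} [Fintype ι]
    [NormedAddCommGroup E] [NormedSpace ℂ E] [CompleteSpace E] {g : (ι → ℂ) → E} {C : ℝ}
    (hgc : ContinuousOn g (closedBall 0 1))
    (hgd : DifferentiableOn ℂ g (pi univ fun _ => ball (0 : ℂ) 1 \ {0}))
    (hC : ∀ w : ι → ℂ, (∀ i, ‖w i‖ = 1) → ‖g w‖ ≤ C) {u : ι → ℂ} (hu : u ∈ closedBall 0 1) :
    ‖g u‖ ≤ C := by
  classical
  suffices ∀ s : Finset ι, ∀ u ∈ closedBall (0 : ι → ℂ) 1, (∀ i ∉ s, ‖u i‖ = 1) → ‖g u‖ ≤ C from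
    this Finset.univ u hu (by simp)
  intro s
  induction s using Finset.induction_on with
  | empty => exact fun u _ hu => hC u fun i => hu i (Finset.notMem_empty i)
  | insert k s hks ih =>
    intro u hu hus
    have hslice := Complex.norm_le_of_forall_mem_frontier_norm_le isBounded_ball
      (diffContOnCl_comp_update hgc hgd hu k) (C := C) (z := u k) (fun z hz => ?_) ?_
    · simpa using hslice
    · rw [frontier_ball 0 one_ne_zero, mem_sphere_zero_iff_norm] at hz
      refine ih _ (update_mem_closedBall hu k (mem_closedBall_zero_iff.mpr hz.le)) fun i hi => ?_
      rcases eq_or_ne i k with rfl | hik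
      · simpa using hz
      · simpa [hik] using hus i (by simp [hik, hi])
    · rw [closure_ball 0 one_ne_zero, mem_closedBall_zero_iff]
      exact (norm_le_pi_norm u k).trans (mem_closedBall_zero_iff.mp hu)

section PeakFunction

variable {ι : Type*} [Fintype ι]

noncomputable def peakFunction (w z : ι → ℂ) : ℂ := ∏ i, (1 + starRingEnd ℂ (w i) * z i) / 2

lemma differentiable_peakFunction (w : ι → ℂ) : Differentiable ℂ (peakFunction w) := by
  unfold peakFunction
  fun_prop

lemma peakFunction_self {w : ι → ℂ} (hw : ∀ i, ‖w i‖ = 1) : peakFunction w w = 1 :=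
  Finset.prod_eq_one fun i _ => by rw [Complex.conj_mul', hw i]; norm_num

lemma norm_peakFunction_lt_one {w u : ι → ℂ} (hw : ∀ i, ‖w i‖ = 1) (hu : u ∈ closedBall 0 1)
    (huw : u ≠ w) : ‖peakFunction w u‖ < 1 := by
  have hle : ∀ i, ‖starRingEnd ℂ (w i) * u i‖ ≤ 1 := fun i => by
    rw [norm_mul, Complex.norm_conj, hw i, one_mul]
    exact (norm_le_pi_norm u i).trans (mem_closedBall_zero_iff.mp hu)
  obtain ⟨j, hj⟩ := Function.ne_iff.mp huw
  have hj1 : starRingEnd ℂ (w j) * u j ≠ 1 := fun h => hj <| by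
    simpa [← mul_assoc, Complex.mul_conj', hw j] using congrArg (w j * ·) h
  rw [peakFunction, norm_prod]
  exact Finset.prod_lt_one_of_mem (fun _ _ => norm_nonneg _)
    (fun i _ => norm_one_add_div_two_le_one (hle i)) (Finset.mem_univ j)
    (norm_one_add_div_two_lt_one (hle j) hj1)

end PeakFunction

variable {n : ℕ}

noncomputable def tailProd (t : Fin n → ℂ) (i : Fin n) : ℂ := ∏ j ∈ Finset.Ici i, t j

lemma norm_tailProd (t : Fin n → ℂ) (i : Fin n) : ‖tailProd t i‖ = ∏ j ∈ Finset.Ici i, ‖t j‖ :=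
  norm_prod _ _

lemma differentiable_tailProd : Differentiable ℂ (tailProd : (Fin n → ℂ) → Fin n → ℂ) := by
  unfold tailProd
  fun_prop

lemma tailProd_mem_torusSet {w : Fin n → ℂ} (hw : w ∈ torusSet n) : tailProd w ∈ torusSet n :=
  fun i => by simp [norm_tailProd, hw _]

lemma tailProd_mem_hartogsTriangle {t : Fin n → ℂ}
    (ht : t ∈ pi univ fun _ => ball (0 : ℂ) 1 \ {0}) : tailProd t ∈ hartogsTriangle n := by
  have h0 : ∀ j, 0 < ‖t j‖ := fun j => norm_pos_iff.mpr (ht j trivial).2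
  have h1 : ∀ j, ‖t j‖ < 1 := fun j => mem_ball_zero_iff.mp (ht j trivial).1
  have hlt : ∀ i (s : Finset (Fin n)), i ∈ s → ∏ j ∈ s, ‖t j‖ < 1 := fun i s hi =>
    Finset.prod_lt_one_of_mem (fun j _ => (h0 j).le) (fun j _ => (h1 j).le) hi (h1 i)
  refine ⟨fun i j hij => ?_, fun i => ?_⟩
  · have hsub : Finset.Ici j ⊆ Finset.Ici i := Finset.Ici_subset_Ici.mpr hij.le
    simp only [norm_tailProd, ← Finset.prod_sdiff hsub]
    exact mul_lt_of_lt_one_left (Finset.prod_pos fun k _ => h0 k)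
      (hlt i _ (by simpa using hij))
  · exact (norm_tailProd t i).trans_lt (hlt i _ (Finset.mem_Ici.mpr le_rfl))

lemma tailProd_mem_closure_hartogsTriangle {t : Fin n → ℂ} (ht : t ∈ closedBall 0 1) :
    tailProd t ∈ closure (hartogsTriangle n) :=
  map_mem_closure differentiable_tailProd.continuous
    (closedBall_subset_closure_pi_ball_diff_zero ht) fun _ => tailProd_mem_hartogsTriangle

lemma exists_tailProd_eq {z : Fin n → ℂ} (hmono : Monotone fun i => ‖z i‖)
    (hle : ∀ i, ‖z i‖ ≤ 1) (hne : ∀ i j, i < j → z j ≠ 0) :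
    ∃ t ∈ closedBall (0 : Fin n → ℂ) 1, tailProd t = z := by
  classical
  let t i := if IsMax i then z i else z i / z (Order.succ i)
  refine ⟨t, ?_, funext fun i => ?_⟩
  · rw [closedBall_pi _ zero_le_one]
    refine fun i _ => mem_closedBall_zero_iff.mpr ?_
    by_cases hi : IsMax i
    · simpa [t, hi] using hle i
    · simpa [t, hi, norm_div] using div_le_one_of_le₀ (hmono (Order.le_succ i)) (norm_nonneg _)
  induction i using WellFoundedGT.induction with
  | _ i ih =>
  rw [tailProd, ← Finset.Ioi_insert, Finset.prod_insert Finset.notMem_Ioi_self]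
  by_cases hi : IsMax i
  · simp [t, hi]
  · have hsucc := Order.lt_succ_of_not_isMax hi
    rw [← Finset.Ici_succ_eq_Ioi_of_not_isMax hi, ← tailProd, ih _ hsucc]
    simpa [t, hi] using div_mul_cancel₀ (z i) (hne i _ hsucc)

lemma isOpen_hartogsTriangle : IsOpen (hartogsTriangle n) := by
  have : hartogsTriangle n = (⋂ (i) (j) (_ : i < j), {z : Fin n → ℂ | ‖z i‖ < ‖z j‖}) ∩
      ⋂ i, {z | ‖z i‖ < 1} := by
    ext z
    simp [hartogsTriangle, StrictMono]
  rw [this]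
  refine .inter (isOpen_iInter_of_finite fun i => isOpen_iInter_of_finite fun j =>
    isOpen_iInter_of_finite fun _ => ?_) (isOpen_iInter_of_finite fun i => ?_)
  · exact isOpen_lt (continuous_apply i).norm (continuous_apply j).norm
  · exact isOpen_lt (continuous_apply i).norm continuous_const

lemma closure_hartogsTriangle_subset_closedBall :
    closure (hartogsTriangle n) ⊆ closedBall 0 1 :=
  closure_minimal (fun _ hz => mem_closedBall_zero_iff.mpr
    ((pi_norm_le_iff_of_nonneg zero_le_one).mpr fun i => (hz.2 i).le)) isClosed_closedBall

lemma isCompact_closure_hartogsTriangle : IsCompact (closure (hartogsTriangle n)) :=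
  (isCompact_closedBall 0 1).of_isClosed_subset isClosed_closure
    closure_hartogsTriangle_subset_closedBall

lemma torusSet_subset_closure_hartogsTriangle : torusSet n ⊆ closure (hartogsTriangle n) := by
  intro w hw
  obtain ⟨t, ht, rfl⟩ := exists_tailProd_eq (z := w) (fun i j _ => by simp [hw i, hw j])
    (fun i => (hw i).le) fun i j _ => norm_ne_zero_iff.mp (by simp [hw j])
  exact tailProd_mem_closure_hartogsTriangle ht

lemma torusSet_subset_frontier_hartogsTriangle (hn : 2 ≤ n) :
    torusSet n ⊆ frontier (hartogsTriangle n) := by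
  rw [isOpen_hartogsTriangle.frontier_eq]
  refine fun w hw => ⟨torusSet_subset_closure_hartogsTriangle hw, fun hw' => ?_⟩
  have := hw'.1 (show (⟨0, by omega⟩ : Fin n) < ⟨1, by omega⟩ from Fin.mk_lt_mk.mpr one_pos)
  simp [hw _] at this

theorem norm_le_biSup_torusSet {E : Type*} [NormedAddCommGroup E] [NormedSpace ℂ E]
    [CompleteSpace E] {f : (Fin n → ℂ) → E} (hfc : ContinuousOn f (closure (hartogsTriangle n)))
    (hfd : DifferentiableOn ℂ f (hartogsTriangle n)) {z : Fin n → ℂ}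
    (hz : z ∈ hartogsTriangle n) : ‖f z‖ ≤ ⨆ w ∈ torusSet n, ‖f w‖ := by
  obtain ⟨t, ht, rfl⟩ := exists_tailProd_eq hz.1.monotone (fun i => (hz.2 i).le)
    fun i j hij => norm_pos_iff.mp ((norm_nonneg _).trans_lt (hz.1 hij))
  have hbdd : BddAbove ((‖f ·‖) '' torusSet n) :=
    (isCompact_closure_hartogsTriangle.image_of_continuousOn hfc.norm).bddAbove.mono
      (image_mono torusSet_subset_closure_hartogsTriangle)
  refine polydisc_norm_le_of_forall_torus_norm_le (g := f ∘ tailProd) ?_ ?_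
    (fun w hw => le_ciSup₂_of_bddAbove_image hbdd (tailProd_mem_torusSet hw)) ht
  · exact hfc.comp differentiable_tailProd.continuous.continuousOn
      fun _ => tailProd_mem_closure_hartogsTriangle
  · exact hfd.comp differentiable_tailProd.differentiableOn fun _ => tailProd_mem_hartogsTriangle

theorem torusSet_subset_of_forall_norm_le_biSup {S : Set (Fin n → ℂ)} (hS : IsClosed S)
    (hSK : S ⊆ closure (hartogsTriangle n))
    (hmax : ∀ f : (Fin n → ℂ) → ℂ, ContinuousOn f (closure (hartogsTriangle n)) →
      DifferentiableOn ℂ f (hartogsTriangle n) →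
      ∀ z ∈ hartogsTriangle n, ‖f z‖ ≤ ⨆ w ∈ S, ‖f w‖) :
    torusSet n ⊆ S := by
  intro w hw
  by_contra hwS
  have hFc := (differentiable_peakFunction w).continuous
  have hsup : ⨆ v ∈ S, ‖peakFunction w v‖ < 1 :=
    ((isCompact_closedBall 0 1).of_isClosed_subset hS
      (hSK.trans closure_hartogsTriangle_subset_closedBall)).biSup_lt hFc.norm.continuousOn
      one_pos fun v hv => norm_peakFunction_lt_one hw
        (closure_hartogsTriangle_subset_closedBall (hSK hv)) (ne_of_mem_of_not_mem hv hwS)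
  have hnear : ∀ᶠ z in 𝓝 w, ⨆ v ∈ S, ‖peakFunction w v‖ < ‖peakFunction w z‖ :=
    (hFc.norm.tendsto w).eventually (lt_mem_nhds (by simpa [peakFunction_self hw] using hsup))
  obtain ⟨z, hz, hFz⟩ := ((mem_closure_iff_frequently.mp
    (torusSet_subset_closure_hartogsTriangle hw)).and_eventually hnear).exists
  exact (hmax _ hFc.continuousOn (differentiable_peakFunction w).differentiableOn z hz).not_gt hFz

theorem stmt1 (n : ℕ) (hn : 2 ≤ n) :
    torusSet n ⊆ frontier (hartogsTriangle n) ∧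
    (∀ f : (Fin n → ℂ) → ℂ, ContinuousOn f (closure (hartogsTriangle n)) →
      DifferentiableOn ℂ f (hartogsTriangle n) →
      ∀ z ∈ hartogsTriangle n, ‖f z‖ ≤ ⨆ w ∈ torusSet n, ‖f w‖) ∧
    (∀ S : Set (Fin n → ℂ), IsClosed S → S ⊆ frontier (hartogsTriangle n) →
      (∀ f : (Fin n → ℂ) → ℂ, ContinuousOn f (closure (hartogsTriangle n)) →
        DifferentiableOn ℂ f (hartogsTriangle n) →
        ∀ z ∈ hartogsTriangle n, ‖f z‖ ≤ ⨆ w ∈ S, ‖f w‖) →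
      torusSet n ⊆ S) :=
  ⟨torusSet_subset_frontier_hartogsTriangle hn,
    fun _ hfc hfd _ hz => norm_le_biSup_torusSet hfc hfd hz,
    fun _ hS hSfr hmax => torusSet_subset_of_forall_norm_le_biSup hS
      (hSfr.trans frontier_subset_closure) hmax⟩
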